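/- (Theorem 6.5) Fix n ≥ 1. A subset C ⊆ ℤ × {0,…,n} is a configuration of ℤA_{n+1} if and only if there exists a 2-Brauer relation of rank n, i.e. a noncrossing involution σ : ZMod n → ZMod n, such that C = { (p,r) ∈ ℤ × {0,…,n} : the image of p+r in ZMod n equals σ applied to the image of p in ZMod n }. Moreover σ is uniquely determined by C, so this assignment is a bijection between the configurations of ℤA_{n+1} and the 2-Brauer relations of rank n. -/

import Mathlib

/-- Sum over the arrows `y → v` of `ℤA_{n+1}` of the value `f v`. The vertex set of
`ℤA_{n+1}` is `ℤ × {0,…,n}`, with arrows `(q,s) → (q,s+1)` for `s < n` and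
`(q,s) → (q+1,s-1)` for `0 < s`. -/
def stepA (n : ℕ) (f : ℤ × ℕ → ℕ) (y : ℤ × ℕ) : ℤ :=
  (if y.2 < n then (f (y.1, y.2 + 1) : ℤ) else 0) +
    (if 0 < y.2 then (f (y.1 + 1, y.2 - 1) : ℤ) else 0)

/-- `hA n x k y` is `h_k(y,x)` for `ℤA_{n+1}`: `h_0(y,x) = δ(y,x)` and, for `k > 0`,
`h_k(y,x) = max(h'_k(y,x), 0)` where
`h'_k(y,x) = ∑_{y → v} h_{k-1}(v,x) - h_{k-2}(τ⁻¹ y, x)` and `τ⁻¹(q,s) = (q+1,s)`. -/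
def hA (n : ℕ) (x : ℤ × ℕ) : ℕ → ℤ × ℕ → ℕ
  | 0 => fun y => if y = x then 1 else 0
  | 1 => fun y => (stepA n (hA n x 0) y).toNat
  | k + 2 => fun y =>
      (stepA n (hA n x (k + 1)) y - (hA n x k (y.1 + 1, y.2) : ℤ)).toNat

/-- `h'A n x k y` is `h'_k(y,x)` (meaningful for `k ≥ 1`):
`h'_k(y,x) = ∑_{y → v} h_{k-1}(v,x) - h_{k-2}(τ⁻¹ y, x) ∈ ℤ`. -/
def h'A (n : ℕ) (x : ℤ × ℕ) (k : ℕ) (y : ℤ × ℕ) : ℤ :=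
  stepA n (hA n x (k - 1)) y -
    (if 2 ≤ k then (hA n x (k - 2) (y.1 + 1, y.2) : ℤ) else 0)

/-- `hTotA n y x = h(y,x) = ∑_{k ≥ 0} h_k(y,x)` (a finite sum, via `finsum`). -/
noncomputable def hTotA (n : ℕ) (y x : ℤ × ℕ) : ℕ := ∑ᶠ k : ℕ, hA n x k y

/-- `ω` for `ℤA_{n+1}`: `ω(p,r) = (p+r-n, n-r)`. -/
def ωA (n : ℕ) (v : ℤ × ℕ) : ℤ × ℕ := (v.1 + v.2 - n, n - v.2)

/-- A configuration of `ℤA_{n+1}`: a set `C` of vertices of `ℤA_{n+1}` such that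
(C1) every vertex `y` satisfies `h(y,c) > 0` for some `c ∈ C`, and
(C2) `ω C = C` and for `c, d ∈ C`, `h(d,c)` is `2` if `d = c = ω c`, `1` if
`d = c ≠ ω c` or `d = ω c ≠ c`, and `0` otherwise. -/
def IsConfigA (n : ℕ) (C : Set (ℤ × ℕ)) : Prop :=
  (∀ v ∈ C, v.2 ≤ n) ∧
    (∀ y : ℤ × ℕ, y.2 ≤ n → ∃ c ∈ C, 0 < hTotA n y c) ∧
    ωA n '' C = C ∧
    ∀ c ∈ C, ∀ d ∈ C,
      hTotA n d c =
        if d = c ∧ c = ωA n c then 2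
        else if d = c ∨ d = ωA n c then 1
        else 0

/-- A `2`-Brauer relation of rank `n`: an involution `σ` of `ZMod n` which is
noncrossing with respect to the circular placement of `ZMod n` (ordered by
the value map `ZMod.val`). -/
def IsTwoBrauer (n : ℕ) (σ : ZMod n → ZMod n) : Prop :=
  Function.Involutive σ ∧
    ¬ ∃ i j : ZMod n, i.val < j.val ∧ j.val < (σ i).val ∧ (σ i).val < (σ j).val

/-! Read a vertex `(p, r)` of `ℤA_{n+1}` as the chord of the `n`-gon from `p` to `p + r`
(mod `n`). By induction on `k`, `h_k((q, s), (p, r))` is `1` if `q ≤ p ≤ q + s ≤ p + r ≤ q + n`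
and `k = 2(p - q) + r - s`, and `0` otherwise; so `h((q, s), (p, r)) ∈ {0, 1}` detects when the
two chords interleave in this order. For a configuration `C`, (C1) at the vertices `(p, 0)` gives
a chord of `C` starting at every `p`, (C2) forces all chords of `C` starting at `p` to share their
other end `σ p` and forbids crossings, and `ω(C) = C` makes `σ` an involution. Conversely, the
chords of a noncrossing involution satisfy (C2) because two interleaving ones coincide or are
exchanged by `ω`, and (C1) by a pigeonhole argument on the chords starting at
`q, q + 1, …, q + s - 1`. -/

open Function

theorem hA_eq {n : ℕ} {p : ℤ} {r : ℕ} (hr : r ≤ n) (k : ℕ) {q : ℤ} {s : ℕ} (hs : s ≤ n) :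
    hA n (p, r) k (q, s) =
      if q ≤ p ∧ p ≤ q + s ∧ q + s ≤ p + r ∧ p + r ≤ q + n ∧ k = 2 * (p - q) + (r - s : ℤ)
      then 1 else 0 := by
  induction k using Nat.strong_induction_on generalizing q s with
  | _ k IH =>
  rcases k with _ | _ | k
  · simp only [hA, Prod.mk.injEq]
    split_ifs <;> omega
  · simp only [hA, stepA, Prod.mk.injEq]
    split_ifs <;> omega
  · simp only [hA, stepA]
    split_ifs <;> simp (disch := omega) only [IH] <;> split_ifs <;> omega

theorem hTotA_eq {n : ℕ} {q p : ℤ} {s r : ℕ} (hs : s ≤ n) (hr : r ≤ n) :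
    hTotA n (q, s) (p, r) =
      if q ≤ p ∧ p ≤ q + s ∧ q + s ≤ p + r ∧ p + r ≤ q + n then 1 else 0 := by
  unfold hTotA
  split_ifs with h
  · rw [finsum_eq_single _ (2 * (p - q) + (r - s : ℤ)).toNat]
    · rw [hA_eq hr _ hs, if_pos ⟨h.1, h.2.1, h.2.2.1, h.2.2.2, by omega⟩]
    · intro k hk
      rw [hA_eq hr _ hs, if_neg]
      omega
  · refine finsum_eq_zero_of_forall_eq_zero fun k => ?_
    rw [hA_eq hr _ hs, if_neg]
    tauto

theorem ωA_injOn (n : ℕ) : Set.InjOn (ωA n) {v | v.2 ≤ n} := by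
  rintro ⟨p, r⟩ hr ⟨q, s⟩ hs h
  simp only [ωA, Prod.mk.injEq, Set.mem_ofPred_eq] at h hr hs ⊢
  omega

theorem ωA_ne_self {n : ℕ} [NeZero n] (v : ℤ × ℕ) : ωA n v ≠ v := by
  have := NeZero.pos n
  simp only [ωA, ne_eq, Prod.ext_iff]
  omega

namespace ZMod

theorem natCast_eq_natCast_iff_of_le {n x y : ℕ} (hx : x ≤ n) (hy : y ≤ n) :
    (x : ZMod n) = y ↔ x = y ∨ x = 0 ∧ y = n ∨ x = n ∧ y = 0 := by
  rw [natCast_eq_natCast_iff']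
  rcases hx.lt_or_eq with hx | rfl <;> rcases hy.lt_or_eq with hy | rfl
  · rw [Nat.mod_eq_of_lt hx, Nat.mod_eq_of_lt hy]; omega
  · rw [Nat.mod_eq_of_lt hx, Nat.mod_self]; omega
  · rw [Nat.mod_self, Nat.mod_eq_of_lt hy]; omega
  · simp

theorem intCast_val {n : ℕ} [NeZero n] (i : ZMod n) : ((i.val : ℤ) : ZMod n) = i := by
  rw [Int.cast_natCast, natCast_zmod_val]

theorem val_add_natCast {n : ℕ} [NeZero n] (b : ZMod n) {t : ℕ} (ht : t < n) :
    b.val + t < n ∧ (b + t).val = b.val + t ∨ n ≤ b.val + t ∧ (b + t).val + n = b.val + t := by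
  have hval : (t : ZMod n).val = t := val_cast_of_lt ht
  rcases lt_or_ge (b.val + t) n with h | h
  · exact .inl ⟨h, by rw [val_add_of_lt (by omega), hval]⟩
  · have := val_add_val_of_le (a := b) (b := (t : ZMod n)) (by omega)
    exact .inr ⟨h, by omega⟩

end ZMod

section Chords

variable {n : ℕ} {σ : ZMod n → ZMod n}

/-- `chordSet n σ` is the set of vertices `(p, r)` whose chord `{p, p + r}` is a pair of `σ`. -/
def chordSet (n : ℕ) (σ : ZMod n → ZMod n) : Set (ℤ × ℕ) :=
  {v : ℤ × ℕ | v.2 ≤ n ∧ ((v.1 + (v.2 : ℤ) : ℤ) : ZMod n) = σ ((v.1 : ℤ) : ZMod n)}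

theorem val_mem_chordSet [NeZero n] (i : ZMod n) :
    ((i.val : ℤ), (σ i - i).val) ∈ chordSet n σ := by
  refine ⟨(ZMod.val_lt _).le, ?_⟩
  push_cast [ZMod.natCast_val, ZMod.cast_id', ZMod.intCast_val]
  ring

theorem chordSet_injective [NeZero n] : Injective (chordSet n) := by
  intro σ₁ σ₂ h
  funext i
  have hmem := (val_mem_chordSet (σ := σ₁) i).2
  have hmem₂ := (h ▸ val_mem_chordSet (σ := σ₁) i : _ ∈ chordSet n σ₂).2
  rw [ZMod.intCast_val] at hmem hmem₂
  exact hmem.symm.trans hmem₂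

theorem exists_crossing_of_interleaved [NeZero n] (hσ : Involutive σ) (b : ZMod n)
    {a s c : ℕ} (ha : 0 < a) (has : a < s) (hsc : s < c) (hcn : c < n)
    (h₁ : σ b = b + s) (h₂ : σ (b + a) = b + c) :
    ∃ i j : ZMod n, i.val < j.val ∧ j.val < (σ i).val ∧ (σ i).val < (σ j).val := by
  have h₃ : σ (b + s) = b := by rw [← h₁, hσ]
  have h₄ : σ (b + c) = b + a := by rw [← h₂, hσ]
  have hva := ZMod.val_add_natCast b (t := a) (by omega)
  have hvs := ZMod.val_add_natCast b (t := s) (by omega)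
  have hvc := ZMod.val_add_natCast b (t := c) (by omega)
  have hb := ZMod.val_lt b
  -- which pair crosses in the `val` order depends on where `b + ·` wraps around past `0`
  by_cases hc' : b.val + c < n
  · exact ⟨b, b + a, by rw [h₁, h₂]; omega⟩
  by_cases hs' : b.val + s < n
  · exact ⟨b + c, b, by rw [h₁, h₄]; omega⟩
  by_cases ha' : b.val + a < n
  · exact ⟨b + s, b + c, by rw [h₃, h₄]; omega⟩
  · exact ⟨b + a, b + s, by rw [h₂, h₃]; omega⟩

theorem IsTwoBrauer.eq_or_eq_of_interleaved [NeZero n] (hσ : IsTwoBrauer n σ) (b : ZMod n)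
    {a s c : ℕ} (has : a ≤ s) (hsc : s ≤ c) (hcn : c ≤ n)
    (h₁ : σ b = b + s) (h₂ : σ (b + a) = b + c) :
    a = 0 ∧ s = c ∨ c = n ∧ a = s := by
  have h₃ : σ (b + s) = b := by rw [← h₁, hσ.1]
  have cancel : ∀ {x y : ℕ}, x ≤ n → y ≤ n → b + x = b + y →
      x = y ∨ x = 0 ∧ y = n ∨ x = n ∧ y = 0 := fun hx hy h =>
    (ZMod.natCast_eq_natCast_iff_of_le hx hy).1 (add_left_cancel h)
  rcases Nat.eq_zero_or_pos a with rfl | ha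
  · have := cancel (x := s) (y := c) (by omega) hcn (h₁.symm.trans (by simpa using h₂))
    omega
  rcases has.lt_or_eq with has | rfl
  · rcases hsc.lt_or_eq with hsc | rfl
    · rcases hcn.lt_or_eq with hcn | rfl
      · exact (hσ.2 (exists_crossing_of_interleaved hσ.1 b ha has hsc hcn h₁ h₂)).elim
      · have := cancel (x := a) (y := s) (by omega) (by omega)
          (hσ.1.injective (by rw [h₂, h₃, ZMod.natCast_self, add_zero]))
        omega
    · have := cancel (x := a) (y := 0) (by omega) (by omega)
        (hσ.1.injective (by rw [h₂, ← h₁, Nat.cast_zero, add_zero]))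
      omega
  · have := cancel (x := c) (y := 0) hcn (by omega) (by rw [← h₂, h₃, Nat.cast_zero, add_zero])
    omega

theorem IsTwoBrauer.eq_or_eq_ωA_of_interleaved [NeZero n] (hσ : IsTwoBrauer n σ) {p q : ℤ} {r s : ℕ}
    (hc : (p, r) ∈ chordSet n σ) (hd : (q, s) ∈ chordSet n σ)
    (h₁ : q ≤ p) (h₂ : p ≤ q + s) (h₃ : q + s ≤ p + r) (h₄ : p + r ≤ q + n) :
    (q, s) = (p, r) ∨ (q, s) = ωA n (p, r) := by
  obtain ⟨a, rfl⟩ : ∃ a : ℕ, p = q + a := ⟨(p - q).toNat, by omega⟩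
  have key := hσ.eq_or_eq_of_interleaved (q : ZMod n) (a := a) (s := s) (c := a + r)
    (by omega) (by omega) (by omega) (by simpa using hd.2.symm)
    (by simpa [add_assoc] using hc.2.symm)
  simp only [ωA, Prod.mk.injEq]
  omega

theorem exists_chord_across [NeZero n] (hσ : Injective σ) (b : ZMod n) {s : ℕ} (hs : s ≤ n) :
    ∃ t ≤ s, ∃ u, s ≤ u ∧ u ≤ n ∧ σ (b + t) = b + u := by
  have offset : ∀ t : ℕ, σ (b + t) = b + (σ (b + t) - b).val := fun t => by
    rw [ZMod.natCast_zmod_val]; ring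
  by_contra! H
  rcases Nat.eq_zero_or_pos s with rfl | hs₀
  · exact H 0 le_rfl _ (Nat.zero_le _) (ZMod.val_lt _).le (offset 0)
  -- pigeonhole: the offsets of `σ (b + t)`, `t < s`, would be distinct values in `(0, s)`
  have hcard : (Finset.range s).card ≤ (Finset.Ioo 0 s).card := by
    refine Finset.card_le_card_of_injOn (fun t => (σ (b + t) - b).val) ?_ ?_
    · intro t ht
      have hne : (σ (b + t) - b).val ≠ 0 := fun h0 =>
        H t (by simp at ht; omega) n hs le_rfl <| by
          rw [offset t, h0, ZMod.natCast_self, Nat.cast_zero]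
      have hlt : (σ (b + t) - b).val < s := by
        by_contra! hge
        exact H t (by simp at ht; omega) _ hge (ZMod.val_lt _).le (offset t)
      simp only [Finset.coe_Ioo, Set.mem_Ioo]
      omega
    · intro t ht t' ht' h
      simp only [Finset.coe_range, Set.mem_Iio] at ht ht'
      have := hσ (sub_left_injective (ZMod.val_injective n h))
      have := congrArg ZMod.val (add_left_cancel this)
      rwa [ZMod.val_cast_of_lt (by omega), ZMod.val_cast_of_lt (by omega)] at this
  simp only [Finset.card_range, Nat.card_Ioo] at hcard
  omega

theorem ωA_image_chordSet [NeZero n] (hσ : Involutive σ) :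
    ωA n '' chordSet n σ = chordSet n σ := by
  ext ⟨p, r⟩
  constructor
  · rintro ⟨⟨q, s⟩, ⟨hs, hmem⟩, he⟩
    simp only [ωA, Prod.mk.injEq] at he
    obtain ⟨rfl, rfl⟩ := he
    refine ⟨by omega, ?_⟩
    push_cast [Nat.cast_sub hs, ZMod.natCast_self] at hmem ⊢
    rw [sub_zero, hmem, hσ]
    linear_combination -hmem
  · rintro ⟨hr, hmem⟩
    refine ⟨(p + r, n - r), ⟨by omega, ?_⟩, by simp only [ωA, Prod.mk.injEq]; omega⟩
    push_cast [Nat.cast_sub hr, ZMod.natCast_self] at hmem ⊢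
    rw [hmem, hσ]
    linear_combination -hmem

theorem isConfigA_chordSet [NeZero n] (hσ : IsTwoBrauer n σ) : IsConfigA n (chordSet n σ) := by
  refine ⟨fun _ hv => hv.1, ?_, ωA_image_chordSet hσ.1, ?_⟩
  · rintro ⟨q, s⟩ hs
    obtain ⟨t, hts, u, hsu, hun, h⟩ := exists_chord_across hσ.1.injective (q : ZMod n) hs
    refine ⟨(q + t, u - t), ⟨by omega, ?_⟩, ?_⟩
    · push_cast [Nat.cast_sub (hts.trans hsu)]
      rw [h]
      ring
    · rw [hTotA_eq hs (by omega), if_pos (by omega)]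
      exact one_pos
  · rintro ⟨p, r⟩ hc ⟨q, s⟩ hd
    rw [if_neg fun h => ωA_ne_self _ h.2.symm, hTotA_eq hd.1 hc.1]
    refine if_congr ⟨fun ⟨h₁, h₂, h₃, h₄⟩ => hσ.eq_or_eq_ωA_of_interleaved hc hd h₁ h₂ h₃ h₄,
      ?_⟩ rfl rfl
    have := hc.1
    rintro (h | h) <;> simp only [ωA, Prod.mk.injEq] at h <;> omega

end Chords

namespace IsConfigA

variable {n : ℕ} {C : Set (ℤ × ℕ)}

theorem mem_iff_ωA_mem (hC : IsConfigA n C) {v : ℤ × ℕ} (hv : v.2 ≤ n) :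
    v ∈ C ↔ ωA n v ∈ C := by
  refine ⟨fun h => hC.2.2.1 ▸ Set.mem_image_of_mem _ h, fun h => ?_⟩
  rw [← hC.2.2.1] at h
  obtain ⟨w, hw, hwv⟩ := h
  exact ωA_injOn n (hC.1 w hw) hv hwv ▸ hw

theorem mem_iff_add_mem (hC : IsConfigA n C) {p : ℤ} {r : ℕ} (hr : r ≤ n) :
    (p, r) ∈ C ↔ (p + n, r) ∈ C :=
  calc (p, r) ∈ C ↔ ωA n (p + r, n - r) ∈ C := by
        rw [show ωA n (p + r, n - r) = (p, r) by simp only [ωA, Prod.mk.injEq]; omega]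
    _ ↔ (p + r, n - r) ∈ C := (hC.mem_iff_ωA_mem (Nat.sub_le n r)).symm
    _ ↔ ωA n (p + n, r) ∈ C := by
        rw [show ωA n (p + n, r) = (p + r, n - r) from Prod.ext (by simp only [ωA]; ring) rfl]
    _ ↔ (p + n, r) ∈ C := (hC.mem_iff_ωA_mem hr).symm

theorem mem_of_modEq (hC : IsConfigA n C) {p p' : ℤ} {r : ℕ} (h : (p, r) ∈ C)
    (hp : p ≡ p' [ZMOD n]) : (p', r) ∈ C := by
  have hr : r ≤ n := hC.1 _ h
  obtain ⟨k, hk⟩ := Int.modEq_iff_dvd.1 hp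
  rw [show p' = p + n * k by omega]
  clear hp hk
  induction k using Int.induction_on with
  | zero => simpa using h
  | succ k ih => rwa [show p + n * (k + 1) = p + n * k + n by ring, ← hC.mem_iff_add_mem hr]
  | pred k ih => rwa [hC.mem_iff_add_mem hr, show p + n * (-k - 1) + n = p + n * -k by ring]

theorem eq_or_eq_ωA_of_hTotA_pos (hC : IsConfigA n C) {c d : ℤ × ℕ} (hc : c ∈ C) (hd : d ∈ C)
    (hpos : 0 < hTotA n d c) : d = c ∨ d = ωA n c := by
  by_contra! h
  rw [hC.2.2.2 c hc d hd, if_neg fun h' => h.1 h'.1, if_neg fun h' => h'.elim h.1 h.2] at hpos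
  exact hpos.false

theorem exists_mem_column (hC : IsConfigA n C) (p : ℤ) : ∃ r, (p, r) ∈ C := by
  obtain ⟨⟨q, r⟩, hc, hpos⟩ := hC.2.1 (p, 0) (Nat.zero_le n)
  rw [hTotA_eq (Nat.zero_le n) (hC.1 _ hc)] at hpos
  split_ifs at hpos with h
  · exact ⟨r, by rwa [show q = p by omega] at hc⟩
  · exact (lt_irrefl 0 hpos).elim

theorem eq_or_zero_of_mem_column (hC : IsConfigA n C) {p : ℤ} {r r' : ℕ} (hrr' : r ≤ r')
    (h : (p, r) ∈ C) (h' : (p, r') ∈ C) : r = r' ∨ r = 0 ∧ r' = n := by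
  have hr' := hC.1 _ h'
  have hpos : 0 < hTotA n (p, r) (p, r') := by
    rw [hTotA_eq (hrr'.trans hr') hr', if_pos (by omega)]
    exact one_pos
  rcases hC.eq_or_eq_ωA_of_hTotA_pos h' h hpos with he | he <;>
    simp only [ωA, Prod.mk.injEq] at he <;> omega

theorem mem_column_iff (hC : IsConfigA n C) {p : ℤ} {r r' : ℕ} (h : (p, r) ∈ C) :
    (p, r') ∈ C ↔ r' ≤ n ∧ (r' : ZMod n) = r := by
  have hr := hC.1 _ h
  have hω₀ : (p, n) ∈ C ↔ (p, 0) ∈ C := by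
    rw [hC.mem_iff_ωA_mem le_rfl]
    simp [ωA]
  constructor
  · intro h'
    refine ⟨hC.1 _ h', ?_⟩
    rcases le_total r r' with hle | hle
    · rcases hC.eq_or_zero_of_mem_column hle h h' with rfl | ⟨rfl, rfl⟩ <;> simp
    · rcases hC.eq_or_zero_of_mem_column hle h' h with rfl | ⟨rfl, rfl⟩ <;> simp
  · rintro ⟨hr', he⟩
    rcases (ZMod.natCast_eq_natCast_iff_of_le hr' hr).1 he with rfl | ⟨rfl, rfl⟩ | ⟨rfl, rfl⟩
    · exact h
    · exact hω₀.1 h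
    · exact hω₀.2 h

theorem exists_eq_chordSet [NeZero n] (hC : IsConfigA n C) :
    ∃ σ : ZMod n → ZMod n, C = chordSet n σ := by
  choose R hR using hC.exists_mem_column
  refine ⟨fun i => ((i.val : ℤ) + R i.val : ℤ), ?_⟩
  ext ⟨p, r⟩
  have hp : (p : ZMod n).val ≡ p [ZMOD n] := (ZMod.intCast_eq_intCast_iff _ _ n).1 (ZMod.intCast_val _)
  rw [hC.mem_column_iff (hC.mem_of_modEq (hR _) hp)]
  simp only [chordSet, Set.mem_ofPred_eq, Int.cast_add, Int.cast_natCast, ZMod.natCast_zmod_val,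
    add_right_inj]

end IsConfigA

section BrauerOfConfig

variable {n : ℕ} [NeZero n] {σ : ZMod n → ZMod n}

theorem involutive_of_isConfigA_chordSet (hC : IsConfigA n (chordSet n σ)) : Involutive σ := by
  intro i
  set r := (σ i - i).val with hr_def
  have hr : r ≤ n := (ZMod.val_lt _).le
  have hω : ωA n ((i.val : ℤ) + r, n - r) = ((i.val : ℤ), r) := by
    simp only [ωA, Prod.mk.injEq]
    omega
  have hmem := ((hC.mem_iff_ωA_mem (Nat.sub_le n r)).2 (hω ▸ val_mem_chordSet i)).2
  dsimp only at hmem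
  rw [show (i.val : ℤ) + r + ((n - r : ℕ) : ℤ) = (i.val : ℤ) + n by omega] at hmem
  push_cast [ZMod.natCast_self, ZMod.intCast_val, hr_def, ZMod.natCast_zmod_val] at hmem
  rw [add_zero, add_sub_cancel] at hmem
  exact hmem.symm

theorem not_crossing_of_isConfigA_chordSet (hC : IsConfigA n (chordSet n σ)) :
    ¬ ∃ i j : ZMod n, i.val < j.val ∧ j.val < (σ i).val ∧ (σ i).val < (σ j).val := by
  rintro ⟨i, j, hij, hjσi, hσij⟩
  have hσj := ZMod.val_lt (σ j)
  have hi := val_mem_chordSet (σ := σ) i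
  have hj := val_mem_chordSet (σ := σ) j
  rw [ZMod.val_sub (by omega)] at hi hj
  have hpos : 0 < hTotA n ((i.val : ℤ), (σ i).val - i.val) ((j.val : ℤ), (σ j).val - j.val) := by
    rw [hTotA_eq (by omega) (by omega), if_pos (by omega)]
    exact one_pos
  rcases hC.eq_or_eq_ωA_of_hTotA_pos hj hi hpos with h | h <;>
    simp only [ωA, Prod.mk.injEq] at h <;> omega

theorem isTwoBrauer_of_isConfigA_chordSet (hC : IsConfigA n (chordSet n σ)) :
    IsTwoBrauer n σ :=
  ⟨involutive_of_isConfigA_chordSet hC, not_crossing_of_isConfigA_chordSet hC⟩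

end BrauerOfConfig

theorem config_ZA_iff_twoBrauer (n : ℕ) (hn : 1 ≤ n) :
    (∀ C : Set (ℤ × ℕ),
      IsConfigA n C ↔
        ∃ σ : ZMod n → ZMod n, IsTwoBrauer n σ ∧
          C = {v : ℤ × ℕ | v.2 ≤ n ∧
            ((v.1 + (v.2 : ℤ) : ℤ) : ZMod n) = σ ((v.1 : ℤ) : ZMod n)}) ∧
      ∀ σ₁ σ₂ : ZMod n → ZMod n, IsTwoBrauer n σ₁ → IsTwoBrauer n σ₂ →
        {v : ℤ × ℕ | v.2 ≤ n ∧
            ((v.1 + (v.2 : ℤ) : ℤ) : ZMod n) = σ₁ ((v.1 : ℤ) : ZMod n)} =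
          {v : ℤ × ℕ | v.2 ≤ n ∧
            ((v.1 + (v.2 : ℤ) : ℤ) : ZMod n) = σ₂ ((v.1 : ℤ) : ZMod n)} →
        σ₁ = σ₂ := by
  have : NeZero n := ⟨by omega⟩
  refine ⟨fun C => ⟨fun hC => ?_, ?_⟩, fun σ₁ σ₂ _ _ h => chordSet_injective h⟩
  · obtain ⟨σ, rfl⟩ := hC.exists_eq_chordSet
    exact ⟨σ, isTwoBrauer_of_isConfigA_chordSet hC, rfl⟩
  · rintro ⟨σ, hσ, rfl⟩
    exact isConfigA_chordSet hσ
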